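/- arXiv:2512.09668 — 3 statements merged into one kernel-verified Lean document; each statement's English description precedes it below -/
import Mathlib

section
/- Let k be a field, ι a finite type, w : ι → ℝ a weight function with w(i) ≥ 0 for all i, and c : Fin n → (ι → k) a family of nonzero vectors with pairwise disjoint supports. Let W be the k-linear span of {c_1, …, c_n}. Then every linearly independent family g : Fin n → (ι → k) with g_j ∈ W for all j satisfies ∑_j wt(g_j) ≥ ∑_i wt(c_i). -/
open Classical in
/-- The weight of a vector `v : ι → k` w.r.t. a weight function `w : ι → ℝ`:
the sum of `w i` over the support `{i | v i ≠ 0}` of `v`. -/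
noncomputable def wt {k ι : Type*} [Field k] [Fintype ι] (w : ι → ℝ) (v : ι → k) : ℝ :=
  ∑ i ∈ Finset.univ.filter (fun i => v i ≠ 0), w i

/-- Let `c : Fin n → (ι → k)` be a family of nonzero vectors with
pairwise disjoint supports, with span `W`. For a nonnegative weight function `w`,
every linearly independent family `g` of `n` vectors contained in `W` has total
weight at least the total weight of `c`. -/
theorem total_wt_le_of_linearIndependent_mem_span
    {k ι : Type*} [Field k] [Fintype ι] {n : ℕ} (w : ι → ℝ)
    (hw : ∀ i, 0 ≤ w i) (c : Fin n → ι → k)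
    (hne : ∀ j, c j ≠ 0)
    (hdisj : ∀ a b : Fin n, a ≠ b →
      Disjoint {i : ι | c a i ≠ 0} {i : ι | c b i ≠ 0})
    (g : Fin n → ι → k)
    (hg : LinearIndependent k g)
    (hgW : ∀ j, g j ∈ Submodule.span k (Set.range c)) :
    ∑ i, wt w (c i) ≤ ∑ j, wt w (g j) := by
  classical
  have hmem := fun j => (Submodule.mem_span_range_iff_exists_fun k).1 (hgW j)
  choose a ha using hmem
  -- disjoint support helper
  have hzero : ∀ {i i0 : Fin n} {x : ι}, i ≠ i0 → c i0 x ≠ 0 → c i x = 0 := by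
    intro i i0 x hne0 hx
    by_contra h
    exact (Set.disjoint_left.1 (hdisj i i0 hne0) h) hx
  -- pointwise value of g j
  have hg_apply : ∀ j x, g j x = ∑ i, a j i * c i x := by
    intro j x
    have := congrFun (ha j) x
    simpa [Finset.sum_apply] using this.symm
  -- c is linearly independent
  have hc : LinearIndependent k c := by
    rw [Fintype.linearIndependent_iff]
    intro x hx i0
    obtain ⟨x', hx'⟩ := Function.ne_iff.1 (hne i0)
    have h0 : ∑ i, x i * c i x' = 0 := by
      have := congrFun hx x'
      simpa [Finset.sum_apply] using this
    rw [Finset.sum_eq_single i0] at h0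
    · rcases mul_eq_zero.1 h0 with h | h
      · exact h
      · exact absurd h hx'
    · intro i _ hi
      rw [hzero hi hx', mul_zero]
    · simp
  -- key algebraic identity
  have hcomb : ∀ x : Fin n → k, ∑ j, x j • g j = ∑ i, (∑ j, x j * a j i) • c i := by
    intro x
    calc ∑ j, x j • g j = ∑ j, ∑ i, (x j * a j i) • c i := by
          simp_rw [← ha, Finset.smul_sum, smul_smul]
      _ = ∑ i, (∑ j, x j * a j i) • c i := by
          rw [Finset.sum_comm]; simp_rw [Finset.sum_smul]
  -- every column of the coefficient matrix has a nonzero entry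
  have hcol : ∀ i0, ∃ j, a j i0 ≠ 0 := by
    intro i0
    set A : Matrix (Fin n) (Fin n) k := Matrix.of a with hA
    have hinj : Function.Injective A.vecMulLinear := by
      rw [injective_iff_map_eq_zero]
      intro x hx
      have hx' : ∀ i, ∑ j, x j * a j i = 0 := by
        intro i
        have := congrFun hx i
        simpa [Matrix.vecMulLinear_apply, Matrix.vecMul, dotProduct, hA]
          using this
      have h0 : ∑ j, x j • g j = 0 := by
        rw [hcomb]
        simp [hx']
      funext j
      exact Fintype.linearIndependent_iff.1 hg x h0 j
    have hsurj := (LinearMap.injective_iff_surjective (f := A.vecMulLinear)).1 hinj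
    obtain ⟨x, hx⟩ := hsurj (Pi.single i0 1)
    have h1 : ∑ j, x j * a j i0 = 1 := by
      have := congrFun hx i0
      simpa [Matrix.vecMulLinear_apply, Matrix.vecMul, dotProduct, hA]
        using this
    by_contra hcon
    push_neg at hcon
    rw [Finset.sum_eq_zero (fun j _ => by rw [hcon j, mul_zero])] at h1
    exact zero_ne_one h1
  -- nonnegativity of wt
  have hwt0 : ∀ v : ι → k, 0 ≤ wt w v := fun v => Finset.sum_nonneg fun i _ => hw i
  -- supports as finsets
  set F : Fin n → Finset ι := fun i => Finset.univ.filter (fun x => c i x ≠ 0) with hF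
  set S : Fin n → Finset (Fin n) := fun j => Finset.univ.filter (fun i => a j i ≠ 0) with hS
  -- key inequality per j
  have hkey : ∀ j, ∑ i ∈ S j, wt w (c i) ≤ wt w (g j) := by
    intro j
    have hdF : (↑(S j) : Set (Fin n)).PairwiseDisjoint F := by
      intro i1 _ i2 _ h12
      simp only [Finset.disjoint_left, hF, Finset.mem_filter, Finset.mem_univ, true_and]
      intro x hx1 hx2
      exact hx2 (hzero h12.symm hx1)
    have heq : ∑ i ∈ S j, wt w (c i) = ∑ x ∈ (S j).biUnion F, w x := by
      rw [Finset.sum_biUnion hdF]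
      rfl
    rw [heq]
    apply Finset.sum_le_sum_of_subset_of_nonneg
    · intro x hx
      simp only [Finset.mem_biUnion, hF, hS, Finset.mem_filter, Finset.mem_univ,
        true_and] at hx
      obtain ⟨i, hai, hci⟩ := hx
      simp only [wt, Finset.mem_filter, Finset.mem_univ, true_and]
      rw [hg_apply j x, Finset.sum_eq_single i]
      · exact mul_ne_zero hai hci
      · intro i' _ hi'
        rw [hzero hi' hci, mul_zero]
      · simp
    · intro x _ _
      exact hw x
  -- put everything together
  calc ∑ i, wt w (c i)
      ≤ ∑ i, ∑ j, (if a j i ≠ 0 then wt w (c i) else 0) := by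
        apply Finset.sum_le_sum
        intro i _
        obtain ⟨j0, hj0⟩ := hcol i
        have h := Finset.single_le_sum
          (f := fun j => if a j i ≠ 0 then wt w (c i) else 0)
          (fun j _ => by by_cases h : a j i ≠ 0 <;> simp [h, hwt0])
          (Finset.mem_univ j0)
        simpa [hj0] using h
    _ = ∑ j, ∑ i, (if a j i ≠ 0 then wt w (c i) else 0) := Finset.sum_comm
    _ = ∑ j, ∑ i ∈ S j, wt w (c i) := by
        simp_rw [hS, Finset.sum_filter]
    _ ≤ ∑ j, wt w (g j) := Finset.sum_le_sum fun j _ => hkey j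
end

section
/- Let k be a field, ι a finite type, w : ι → ℝ a weight function with w(i) > 0 for all i, and c : Fin n → (ι → k) a family of nonzero vectors with pairwise disjoint supports. Let W be the k-linear span of {c_1, …, c_n}. If g : Fin n → (ι → k) is a linearly independent family with g_j ∈ W for all j and ∑_j wt(g_j) = ∑_i wt(c_i), then there exist a permutation π of Fin n and nonzero scalars a : Fin n → k such that g_j = a_j • c_{π(j)} for all j. -/
/-- Let `c : Fin n → (ι → k)` be a family of nonzero vectors with
pairwise disjoint supports, with span `W`, and let `w` be a strictly positive weight
function. If a linearly independent family `g` of `n` vectors in `W` has the same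
total weight as `c`, then `g` agrees with `c` up to a permutation and nonzero
rescaling of its members. -/
theorem eq_up_to_rescaling_of_total_wt_eq
    {k ι : Type*} [Field k] [Fintype ι] {n : ℕ} (w : ι → ℝ)
    (hw : ∀ i, 0 < w i) (c : Fin n → ι → k)
    (hne : ∀ j, c j ≠ 0)
    (hdisj : ∀ a b : Fin n, a ≠ b →
      Disjoint {i : ι | c a i ≠ 0} {i : ι | c b i ≠ 0})
    (g : Fin n → ι → k)
    (hg : LinearIndependent k g)
    (hgW : ∀ j, g j ∈ Submodule.span k (Set.range c))
    (heq : ∑ j, wt w (g j) = ∑ i, wt w (c i)) :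
    ∃ (π : Equiv.Perm (Fin n)) (a : Fin n → k),
      (∀ j, a j ≠ 0) ∧ ∀ j, g j = a j • c (π j) := by
  classical
  have hA : ∀ j, ∃ a : Fin n → k, ∑ i, a i • c i = g j := fun j =>
    (Submodule.mem_span_range_iff_exists_fun k).mp (hgW j)
  choose A hA using hA
  have hzero : ∀ {a b : Fin n} {x : ι}, a ≠ b → c a x ≠ 0 → c b x = 0 := by
    intro a b x hab ha
    by_contra hb
    exact Set.disjoint_left.mp (hdisj a b hab) ha hb
  have hpt : ∀ j x, g j x = ∑ i, A j i * c i x := by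
    intro j x
    rw [← hA j]
    simp [Finset.sum_apply]
  -- support characterization
  have hsupp : ∀ j x, g j x ≠ 0 ↔ ∃ i, A j i ≠ 0 ∧ c i x ≠ 0 := by
    intro j x
    constructor
    · intro h
      by_contra hcon
      push_neg at hcon
      apply h
      rw [hpt]
      apply Finset.sum_eq_zero
      intro i _
      rcases eq_or_ne (A j i) 0 with h0 | h0
      · rw [h0, zero_mul]
      · rw [hcon i h0, mul_zero]
    · rintro ⟨i, hAi, hci⟩
      rw [hpt]
      rw [Finset.sum_eq_single i]
      · exact mul_ne_zero hAi hci
      · intro b _ hb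
        rw [hzero (Ne.symm hb) hci, mul_zero]
      · intro h; exact absurd (Finset.mem_univ i) h
  -- support finset equality
  have hsuppfin : ∀ j, Finset.univ.filter (fun x => g j x ≠ 0)
      = (Finset.univ.filter (fun i => A j i ≠ 0)).biUnion
          (fun i => Finset.univ.filter (fun x => c i x ≠ 0)) := by
    intro j
    ext x
    simp [hsupp j x]
  have hwtg : ∀ j, wt w (g j) = ∑ i ∈ Finset.univ.filter (fun i => A j i ≠ 0), wt w (c i) := by
    intro j
    show (∑ x ∈ Finset.univ.filter (fun x => g j x ≠ 0), w x) = _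
    rw [hsuppfin j]
    apply Finset.sum_biUnion
    intro a ha b hb hab
    rw [Function.onFun, Finset.disjoint_left]
    intro x hxa hxb
    rw [Finset.mem_filter] at hxa hxb
    exact hxb.2 (hzero hab hxa.2)
  have hwtc : ∀ i, 0 < wt w (c i) := by
    intro i
    apply Finset.sum_pos (fun x _ => hw x)
    obtain ⟨x, hx⟩ := Function.ne_iff.mp (hne i)
    exact ⟨x, Finset.mem_filter.mpr ⟨Finset.mem_univ x, hx⟩⟩
  -- rows of A are linearly independent
  have hAind : LinearIndependent k (fun j => A j) := by
    rw [Fintype.linearIndependent_iff]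
    intro t ht
    have hti : ∀ i, ∑ j, t j * A j i = 0 := by
      intro i
      have := congrFun ht i
      simpa [Finset.sum_apply] using this
    have key : ∑ j, t j • g j = 0 := by
      have : ∑ j, t j • g j = ∑ i, (∑ j, t j * A j i) • c i := by
        simp_rw [← hA, Finset.smul_sum, smul_smul, Finset.sum_smul]
        exact Finset.sum_comm
      rw [this]
      simp [hti]
    exact Fintype.linearIndependent_iff.mp hg t key
  -- every column has a nonzero entry
  have hcol : ∀ i, ∃ j, A j i ≠ 0 := by
    intro i
    by_contra h
    push_neg at h
    have hu : IsUnit (Matrix.of A) := Matrix.linearIndependent_rows_iff_isUnit.mp hAind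
    have hdet : (Matrix.of A).det = 0 := Matrix.det_eq_zero_of_column_eq_zero i h
    exact ((Matrix.isUnit_iff_isUnit_det _).mp hu).ne_zero hdet
  set S : Fin n → Finset (Fin n) := fun j => Finset.univ.filter (fun i => A j i ≠ 0) with hS
  set T : Fin n → Finset (Fin n) := fun i => Finset.univ.filter (fun j => A j i ≠ 0) with hT
  have hTcard : ∀ i, 1 ≤ (T i).card := by
    intro i
    obtain ⟨j, hj⟩ := hcol i
    exact Finset.card_pos.mpr ⟨j, Finset.mem_filter.mpr ⟨Finset.mem_univ j, hj⟩⟩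
  -- total weight computation
  have htot : ∑ j, wt w (g j) = ∑ i, ((T i).card : ℝ) * wt w (c i) := by
    simp_rw [hwtg, Finset.sum_filter]
    rw [Finset.sum_comm]
    congr 1
    ext i
    rw [← Finset.sum_filter, Finset.sum_const, nsmul_eq_mul]
  have hT1 : ∀ i, (T i).card = 1 := by
    have hz : ∑ i, (((T i).card : ℝ) - 1) * wt w (c i) = 0 := by
      simp_rw [sub_mul, one_mul, Finset.sum_sub_distrib]
      rw [← htot, heq, sub_self]
    have h0 := (Finset.sum_eq_zero_iff_of_nonneg (fun i _ =>
      mul_nonneg (sub_nonneg.mpr (by exact_mod_cast hTcard i)) (hwtc i).le)).mp hz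
    intro i
    have := h0 i (Finset.mem_univ i)
    have h1 : ((T i).card : ℝ) - 1 = 0 := by
      rcases mul_eq_zero.mp this with h | h
      · exact h
      · exact absurd h (hwtc i).ne'
    have : ((T i).card : ℝ) = 1 := by linarith
    exact_mod_cast this
  -- double counting: rows
  have hScard1 : ∀ j, 1 ≤ (S j).card := by
    intro j
    obtain ⟨i, hi⟩ := Function.ne_iff.mp (hAind.ne_zero j)
    exact Finset.card_pos.mpr ⟨i, Finset.mem_filter.mpr ⟨Finset.mem_univ i, hi⟩⟩
  have hdouble : ∑ j, (S j).card = ∑ i, (T i).card := by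
    simp_rw [hS, hT, Finset.card_filter]
    exact Finset.sum_comm
  have hSsum : ∑ j, (S j).card = n := by
    rw [hdouble]
    simp [hT1]
  have hS1 : ∀ j, (S j).card = 1 := by
    have h : ∑ j : Fin n, 1 = ∑ j, (S j).card := by
      simp [hSsum]
    have := (Finset.sum_eq_sum_iff_of_le (fun j _ => hScard1 j)).mp h
    intro j
    exact ((this j (Finset.mem_univ j))).symm
  -- extract the permutation
  have hSex : ∀ j, ∃ i, S j = {i} := fun j => Finset.card_eq_one.mp (hS1 j)
  choose π hπ using hSex
  have hπmem : ∀ j, A j (π j) ≠ 0 := by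
    intro j
    have : π j ∈ S j := by rw [hπ j]; exact Finset.mem_singleton_self _
    exact (Finset.mem_filter.mp this).2
  have hπinj : Function.Injective π := by
    intro j j' hjj
    have h1 : j ∈ T (π j) := Finset.mem_filter.mpr ⟨Finset.mem_univ j, hπmem j⟩
    have h2 : j' ∈ T (π j) := Finset.mem_filter.mpr ⟨Finset.mem_univ j', by rw [hjj]; exact hπmem j'⟩
    exact Finset.card_le_one.mp (le_of_eq (hT1 (π j))) j h1 j' h2
  have hπbij : Function.Bijective π := Finite.injective_iff_bijective.mp hπinj
  refine ⟨Equiv.ofBijective π hπbij, fun j => A j (π j), fun j => hπmem j, ?_⟩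
  intro j
  show g j = A j (π j) • c (π j)
  rw [← hA j, Finset.sum_eq_single (π j)]
  · intro i _ hi
    have : i ∉ S j := by rw [hπ j]; simp [hi]
    have : A j i = 0 := by
      by_contra h
      exact this (Finset.mem_filter.mpr ⟨Finset.mem_univ i, h⟩)
    rw [this, zero_smul]
  · intro h; exact absurd (Finset.mem_univ _) h
end

section
/- Let b ≤ d be real numbers and let 𝟙_{[b,d)} : ℝ → ℝ denote the indicator function of the half-open interval [b,d). Then for every t ∈ ℝ, ½ · (𝟙_{[b,d)} ∗ 𝟙_{[b,d)})(2t) = max(0, min(t − b, d − t)), where ∗ denotes convolution with respect to Lebesgue measure. -/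
open MeasureTheory Set

/-! The integrand `τ ↦ 𝟙_{[b,d)}(τ) · 𝟙_{[b,d)}(2t - τ)` is the indicator of
`[b,d) ∩ (2t - d, 2t - b]`, so the convolution at `2t` is the length
`max 0 (min d (2t - b) - max b (2t - d))` of that interval, and half of it is the tent. -/

theorem convolution_indicator_one_mul_apply {G : Type*} [MeasurableSpace G] [AddGroup G]
    [MeasurableSub G] (μ : Measure G) {s u : Set G} (hs : MeasurableSet s)
    (hu : MeasurableSet u) (x : G) :
    convolution (s.indicator 1) (u.indicator 1) (ContinuousLinearMap.mul ℝ ℝ) μ x =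
      μ.real (s ∩ (fun τ => x - τ) ⁻¹' u) := by
  have hu' : MeasurableSet ((fun τ => x - τ) ⁻¹' u) := measurable_id.const_sub x hu
  rw [convolution_def, ← integral_indicator_one (hs.inter hu'), inter_indicator_one]
  rfl

theorem Real.volume_real_Ico_inter_Ioc (a b c d : ℝ) :
    volume.real (Ico a b ∩ Ioc c d) = max (min b d - max a c) 0 := by
  rw [measureReal_congr (ae_eq_set_inter (ae_eq_refl (Ico a b))
    ((Ioc_ae_eq_Icc (μ := volume)).trans Ico_ae_eq_Icc.symm)), Ico_inter_Ico, Real.volume_real_Ico]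

theorem half_mul_max_min_sub_max_eq_tent {K : Type*} [Field K] [LinearOrder K]
    [IsStrictOrderedRing K] (b d t : K) :
    1 / 2 * max (min d (2 * t - b) - max b (2 * t - d)) 0 = max 0 (min (t - b) (d - t)) := by
  simp only [max_def, min_def]
  split_ifs <;> linarith

theorem half_convolution_indicator_Ico_self_eq_tent_general (b d : ℝ) (t : ℝ) :
    (1 / 2) * convolution (Set.indicator (Set.Ico b d) (fun _ => (1 : ℝ)))
        (Set.indicator (Set.Ico b d) (fun _ => (1 : ℝ)))
        (ContinuousLinearMap.mul ℝ ℝ) volume (2 * t) =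
      max 0 (min (t - b) (d - t)) := by
  rw [← half_mul_max_min_sub_max_eq_tent, ← Real.volume_real_Ico_inter_Ioc,
    ← preimage_const_sub_Ico,
    ← convolution_indicator_one_mul_apply volume measurableSet_Ico measurableSet_Ico]
  rfl

/-- Rescaling the self-convolution of the indicator function of
`[b, d)` (for `b ≤ d`) recovers the tent function `t ↦ max 0 (min (t - b) (d - t))`
used in standard persistence landscapes:
`½ · (𝟙_{[b,d)} ∗ 𝟙_{[b,d)})(2t) = max 0 (min (t − b) (d − t))`. -/
theorem half_convolution_indicator_Ico_self_eq_tent (b d : ℝ) (hbd : b ≤ d) (t : ℝ) :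
    (1 / 2) * convolution (Set.indicator (Set.Ico b d) (fun _ => (1 : ℝ)))
        (Set.indicator (Set.Ico b d) (fun _ => (1 : ℝ)))
        (ContinuousLinearMap.mul ℝ ℝ) volume (2 * t) =
      max 0 (min (t - b) (d - t)) :=
  half_convolution_indicator_Ico_self_eq_tent_general b d t
end
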